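/- arXiv:1708.00689 — 2 statements merged into one kernel-verified Lean document; each statement's English description precedes it below -/
import Mathlib

section
/- For every α > 0, ( (Γ(α/8)/Γ(α/8 + 3)) · (Γ(α/16 + 3)/Γ(α/16)) )^4 ≥ ( (Γ(α/4)/Γ(α/4 + 3)) · (Γ(α/8 + 3)/Γ(α/8)) )^4; that is, in Example 1 of the paper BDeu never prefers the smaller DAG G⁻ over the larger DAG G⁺, for any value of the imaginary sample size α. -/
open Real

lemma gamma_add_three (x : ℝ) (hx : 0 < x) :
    Real.Gamma (x + 3) = x * (x + 1) * (x + 2) * Real.Gamma x := by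
  have h1 : x + 3 = (x + 2) + 1 := by ring
  have h2 : x + 2 = (x + 1) + 1 := by ring
  have h3 : (x : ℝ) + 1 = x + 1 := rfl
  rw [h1, Real.Gamma_add_one (by positivity), h2, Real.Gamma_add_one (by positivity),
    Real.Gamma_add_one (ne_of_gt hx)]
  ring

/-- in Example 1, BDeu never prefers `G⁻` over `G⁺`, for any `α > 0`. -/
theorem bdeu_example1_never_prefers_smaller (α : ℝ) (hα : 0 < α) :
    ((Real.Gamma (α/8) / Real.Gamma (α/8 + 3)) *
        (Real.Gamma (α/16 + 3) / Real.Gamma (α/16))) ^ 4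
      ≥ ((Real.Gamma (α/4) / Real.Gamma (α/4 + 3)) *
        (Real.Gamma (α/8 + 3) / Real.Gamma (α/8))) ^ 4 := by
  have h4 : 0 < α / 4 := by positivity
  have h8 : 0 < α / 8 := by positivity
  have h16 : 0 < α / 16 := by positivity
  have g4 := Real.Gamma_pos_of_pos h4
  have g8 := Real.Gamma_pos_of_pos h8
  have g16 := Real.Gamma_pos_of_pos h16
  rw [gamma_add_three _ h4, gamma_add_three _ h8, gamma_add_three _ h16]
  have e1 : Real.Gamma (α/8) / (α/8 * (α/8 + 1) * (α/8 + 2) * Real.Gamma (α/8)) *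
      (α/16 * (α/16 + 1) * (α/16 + 2) * Real.Gamma (α/16) / Real.Gamma (α/16))
      = (α/16 * (α/16 + 1) * (α/16 + 2)) / (α/8 * (α/8 + 1) * (α/8 + 2)) := by
    field_simp
  have e2 : Real.Gamma (α/4) / (α/4 * (α/4 + 1) * (α/4 + 2) * Real.Gamma (α/4)) *
      (α/8 * (α/8 + 1) * (α/8 + 2) * Real.Gamma (α/8) / Real.Gamma (α/8))
      = (α/8 * (α/8 + 1) * (α/8 + 2)) / (α/4 * (α/4 + 1) * (α/4 + 2)) := by
    field_simp
  rw [e1, e2]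
  have hb : (α/8 * (α/8 + 1) * (α/8 + 2)) / (α/4 * (α/4 + 1) * (α/4 + 2))
      ≤ (α/16 * (α/16 + 1) * (α/16 + 2)) / (α/8 * (α/8 + 1) * (α/8 + 2)) := by
    rw [div_le_div_iff₀ (by positivity) (by positivity)]
    nlinarith [sq_nonneg α, hα.le, mul_pos hα hα, pow_pos hα 3, pow_pos hα 4,
      pow_pos hα 5, pow_pos hα 6]
  have hnn : 0 ≤ (α/8 * (α/8 + 1) * (α/8 + 2)) / (α/4 * (α/4 + 1) * (α/4 + 2)) := by
    positivity
  exact pow_le_pow_left₀ hnn hb 4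
end

section
/- The following inequality holds: 4·(ψ(17/4) − (9/26)·ψ(17/8) − (17/26)·ψ(25/8)) · ( Γ(1/4)·Γ(17/8)·Γ(9/8) / (Γ(13/4)·Γ(1/8)²) )^4 > ( 4·(ψ(33/8) − (17/50)·ψ(33/16) − (33/50)·ψ(49/16)) + 4·(ψ(9/8) − ψ(17/16)) ) · ( Γ(1/8)·Γ(33/16)·Γ(17/16) / (Γ(25/8)·Γ(1/16)²) )^4. Consequently, in Example 2 of the paper with α = 1, the BDeu posterior expected entropy of G⁻, E(H^{G⁻}(X) | D), strictly exceeds that of G⁺, E(H^{G⁺}(X) | D): BDeu expresses a strict preference between the two DAGs even though the data contribute identical information to both. -/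
open Real

/-- The digamma function: derivative of `log ∘ Γ`. -/
noncomputable def digamma (x : ℝ) : ℝ := deriv (fun y => Real.log (Real.Gamma y)) x

/-!
By `Γ(x + 1) = x Γ(x)` both BDeu factors are rational, `1/40` and `1/72`. The recurrence
`ψ(x + 1) = ψ(x) + 1/x` shifts the digamma values in each entropy to arguments near `6`, where
the bounds `log x ≤ ψ(x + 1)` and `ψ(x) ≤ log x` (slopes of the convex function `log Γ`) are
sharp enough: the `G⁻` entropy exceeds `13/10` and the `G⁺` entropy is below `399/100`.
-/

open Finset

lemma differentiableAt_log_Gamma {x : ℝ} (hx : 0 < x) :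
    DifferentiableAt ℝ (fun y => log (Gamma y)) x :=
  (differentiableAt_log (Gamma_pos_of_pos hx).ne').comp x
    (differentiableAt_Gamma fun m => by linarith [hx, (m.cast_nonneg : (0 : ℝ) ≤ m)])

lemma log_Gamma_add_one {x : ℝ} (hx : 0 < x) : log (Gamma (x + 1)) = log x + log (Gamma x) := by
  rw [Gamma_add_one hx.ne', log_mul hx.ne' (Gamma_pos_of_pos hx).ne']

lemma digamma_add_one {x : ℝ} (hx : 0 < x) : digamma (x + 1) = digamma x + x⁻¹ := by
  have hshift : digamma (x + 1) = deriv (fun y => log (Gamma (y + 1))) x :=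
    (deriv_comp_add_const (fun y => log (Gamma y)) 1 x).symm
  have hlocal : (fun y => log (Gamma (y + 1))) =ᶠ[nhds x] fun y => log y + log (Gamma y) := by
    filter_upwards [eventually_gt_nhds hx] with y hy using log_Gamma_add_one hy
  rw [hshift, hlocal.deriv_eq, deriv_fun_add (differentiableAt_log hx.ne')
    (differentiableAt_log_Gamma hx), deriv_log, add_comm]
  rfl

lemma digamma_add_nat {x : ℝ} (hx : 0 < x) (n : ℕ) :
    digamma (x + n) = digamma x + ∑ k ∈ range n, (x + k)⁻¹ := by
  induction n with
  | zero => simp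
  | succ n ih =>
    rw [Nat.cast_succ, ← add_assoc, digamma_add_one (by positivity), ih, sum_range_succ,
      add_assoc]

lemma slope_log_Gamma {x : ℝ} (hx : 0 < x) :
    slope (log ∘ Gamma) x (x + 1) = log x := by
  rw [slope_def_field, Function.comp_apply, Function.comp_apply, log_Gamma_add_one hx]
  ring

lemma digamma_le_log {x : ℝ} (hx : 0 < x) : digamma x ≤ log x :=
  slope_log_Gamma hx ▸ convexOn_log_Gamma.deriv_le_slope hx (Set.mem_Ioi.2 (by linarith))
    (lt_add_one x) (differentiableAt_log_Gamma hx)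

lemma log_le_digamma_add_one {x : ℝ} (hx : 0 < x) : log x ≤ digamma (x + 1) :=
  slope_log_Gamma hx ▸ convexOn_log_Gamma.slope_le_deriv hx (Set.mem_Ioi.2 (by linarith))
    (lt_add_one x) (differentiableAt_log_Gamma (by linarith))

lemma one_sub_div_le_digamma_add_one_sub {x y : ℝ} (hx : 0 < x) (hy : 0 < y) :
    1 - y / x ≤ digamma (x + 1) - digamma y := by
  have hlog : 1 - y / x ≤ log x - log y := by
    simpa [log_div hx.ne' hy.ne'] using one_sub_inv_le_log_of_pos (div_pos hx hy)
  linarith [log_le_digamma_add_one hx, digamma_le_log hy]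

lemma digamma_sub_digamma_add_one_le {x y : ℝ} (hx : 0 < x) (hy : 0 < y) :
    digamma x - digamma (y + 1) ≤ x / y - 1 := by
  have hlog : log x - log y ≤ x / y - 1 := by
    simpa [log_div hx.ne' hy.ne'] using log_le_sub_one_of_pos (div_pos hx hy)
  linarith [digamma_le_log hx, log_le_digamma_add_one hy]

-- The BDeu marginal likelihood of one parent configuration whose child counts are `1` and `2`,
-- with hyperparameter `a` in each of the two cells.
lemma bdeu_counts_one_two {a : ℝ} (ha : 0 < a) :
    Gamma (2 * a) * Gamma (a + 2) * Gamma (a + 1) / (Gamma (2 * a + 3) * Gamma a ^ 2)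
      = a / (4 * (2 * a + 1)) := by
  have hΓa := (Gamma_pos_of_pos ha).ne'
  have hΓ2a := (Gamma_pos_of_pos (by positivity : 0 < 2 * a)).ne'
  have h₁ : Gamma (a + 2) = (a + 1) * (a * Gamma a) := by
    rw [show a + 2 = a + 1 + 1 by ring, Gamma_add_one (by positivity), Gamma_add_one ha.ne']
  have h₂ : Gamma (2 * a + 3) = (2 * a + 2) * ((2 * a + 1) * (2 * a * Gamma (2 * a))) := by
    rw [show 2 * a + 3 = 2 * a + 1 + 1 + 1 by ring, Gamma_add_one (by positivity),
      Gamma_add_one (by positivity), Gamma_add_one (by positivity)]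
    ring
  rw [h₁, h₂, Gamma_add_one ha.ne']
  field_simp
  ring

lemma expectedEntropy_Gminus_gt :
    13 / 10 < 4 * (digamma (17/4) - (9/26) * digamma (17/8) - (17/26) * digamma (25/8)) := by
  have h₁ := digamma_add_nat (x := 17/4) (by norm_num) 2
  have h₂ := digamma_add_nat (x := 17/8) (by norm_num) 1
  have h₃ := digamma_add_nat (x := 17/8) (by norm_num) 4
  norm_num [sum_range_succ] at h₁ h₂ h₃
  have hgap := one_sub_div_le_digamma_add_one_sub (x := 21/4) (y := 49/8)
    (by norm_num) (by norm_num)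
  norm_num at hgap
  linarith

lemma expectedEntropy_Gplus_lt :
    4 * (digamma (33/8) - (17/50) * digamma (33/16) - (33/50) * digamma (49/16))
      + 4 * (digamma (9/8) - digamma (17/16)) < 399 / 100 := by
  have h₁ := digamma_add_nat (x := 9/8) (by norm_num) 3
  have h₂ := digamma_add_nat (x := 9/8) (by norm_num) 5
  have h₃ := digamma_add_nat (x := 17/16) (by norm_num) 1
  have h₄ := digamma_add_nat (x := 17/16) (by norm_num) 2
  have h₅ := digamma_add_nat (x := 17/16) (by norm_num) 5
  norm_num [sum_range_succ] at h₁ h₂ h₃ h₄ h₅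
  have hgap := digamma_sub_digamma_add_one_le (x := 49/8) (y := 81/16)
    (by norm_num) (by norm_num)
  norm_num at hgap
  linarith

/-- in Example 2 with `α = 1`, the BDeu posterior expected entropy of `G⁻`
strictly exceeds that of `G⁺`. -/
theorem bdeu_example2_entropy_prefers_smaller :
    4 * (digamma (17/4) - (9/26) * digamma (17/8) - (17/26) * digamma (25/8)) *
        (Real.Gamma (1/4) * Real.Gamma (17/8) * Real.Gamma (9/8) /
          (Real.Gamma (13/4) * Real.Gamma (1/8) ^ 2)) ^ 4
      > (4 * (digamma (33/8) - (17/50) * digamma (33/16) - (33/50) * digamma (49/16))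
          + 4 * (digamma (9/8) - digamma (17/16))) *
        (Real.Gamma (1/8) * Real.Gamma (33/16) * Real.Gamma (17/16) /
          (Real.Gamma (25/8) * Real.Gamma (1/16) ^ 2)) ^ 4 := by
  have hGminus := bdeu_counts_one_two (a := 1/8) (by norm_num)
  have hGplus := bdeu_counts_one_two (a := 1/16) (by norm_num)
  norm_num at hGminus hGplus
  rw [hGminus, hGplus]
  linarith [expectedEntropy_Gminus_gt, expectedEntropy_Gplus_lt]
end
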